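/- arXiv:1908.00362 — 2 statements merged into one kernel-verified Lean document; each statement's English description precedes it below -/
import Mathlib

section
/- For t ∈ [0,1] and positive differentiable functions u, w on a domain, defining η_t = (t·u^p + (1-t)·w^p)^{1/p} with p > 1, the pointwise inequality |Dη_t|^p ≤ t·|Du|^p + (1-t)·|Dw|^p holds. -/
/-!
With `S = t u^p + (1 - t) w^p`, `V = u^(p-1) • Du` and `W = w^(p-1) • Dw`, the chain rule gives
`Dη = S^(1/p - 1) • (t • V + (1 - t) • W)`, hence `|Dη|^p = |t • V + (1 - t) • W|^p / S^(p-1)`.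
The map `(a, x) ↦ x^p / a^(p-1) = a (x / a)^p` is the perspective of `x ↦ x^p`, hence jointly
convex on `a > 0, x ≥ 0`. After the triangle inequality, the bound is this convexity at
`(u^p, |V|)` and `(w^p, |W|)`, where the perspective takes the values `|Du|^p` and `|Dw|^p`.
-/

open Real Set

theorem mul_rpow_div_rpow_sub_one {c m : ℝ} (hc : 0 < c) (hm : 0 ≤ m) (p : ℝ) :
    (c * m) ^ p / c ^ (p - 1) = c * m ^ p := by
  rw [mul_rpow hc.le hm, rpow_sub_one hc.ne']
  have : 0 < c ^ p := rpow_pos_of_pos hc p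
  field_simp

theorem convexOn_rpow_div_rpow_sub_one {p : ℝ} (hp : 1 ≤ p) :
    ConvexOn ℝ (Ioi 0 ×ˢ Ici 0) fun q : ℝ × ℝ => q.2 ^ p / q.1 ^ (p - 1) := by
  refine ⟨(convex_Ioi 0).prod (convex_Ici 0), ?_⟩
  rintro ⟨a, x⟩ ⟨ha, hx⟩ ⟨b, y⟩ ⟨hb, hy⟩ s t hs ht hst
  simp only [mem_Ioi, mem_Ici] at ha hx hb hy
  simp only [Prod.smul_mk, Prod.mk_add_mk, smul_eq_mul]
  set S := s * a + t * b
  have hS : 0 < S := convex_Ioi (0 : ℝ) ha hb hs ht hst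
  have hJensen := (convexOn_rpow hp).2 (mem_Ici.2 (div_nonneg hx ha.le))
    (mem_Ici.2 (div_nonneg hy hb.le)) (by positivity : 0 ≤ s * a / S)
    (by positivity : 0 ≤ t * b / S) (by rw [← add_div, div_self hS.ne'])
  simp only [smul_eq_mul] at hJensen
  calc (s * x + t * y) ^ p / S ^ (p - 1)
      = (S * (s * a / S * (x / a) + t * b / S * (y / b))) ^ p / S ^ (p - 1) := by
        congr 2; field_simp
    _ = S * (s * a / S * (x / a) + t * b / S * (y / b)) ^ p :=
        mul_rpow_div_rpow_sub_one hS (by positivity) p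
    _ ≤ S * (s * a / S * (x / a) ^ p + t * b / S * (y / b) ^ p) := by gcongr
    _ = s * (a * (x / a) ^ p) + t * (b * (y / b) ^ p) := by field_simp
    _ = s * (x ^ p / a ^ (p - 1)) + t * (y ^ p / b ^ (p - 1)) := by
        rw [← mul_rpow_div_rpow_sub_one ha (div_nonneg hx ha.le),
          ← mul_rpow_div_rpow_sub_one hb (div_nonneg hy hb.le), mul_div_cancel₀ _ ha.ne',
          mul_div_cancel₀ _ hb.ne']

theorem norm_add_rpow_div_rpow_sub_one_le {E : Type*} [SeminormedAddCommGroup E]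
    [NormedSpace ℝ E] {p a b s t : ℝ} (hp : 1 ≤ p) (ha : 0 < a) (hb : 0 < b)
    (hs : 0 ≤ s) (ht : 0 ≤ t) (hst : s + t = 1) (v w : E) :
    ‖s • v + t • w‖ ^ p / (s * a + t * b) ^ (p - 1)
      ≤ s * (‖v‖ ^ p / a ^ (p - 1)) + t * (‖w‖ ^ p / b ^ (p - 1)) := by
  have hS : 0 < s * a + t * b := convex_Ioi (0 : ℝ) ha hb hs ht hst
  have htri : ‖s • v + t • w‖ ≤ s * ‖v‖ + t * ‖w‖ := by
    simpa [norm_smul, abs_of_nonneg hs, abs_of_nonneg ht] using norm_add_le (s • v) (t • w)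
  calc ‖s • v + t • w‖ ^ p / (s * a + t * b) ^ (p - 1)
      ≤ (s * ‖v‖ + t * ‖w‖) ^ p / (s * a + t * b) ^ (p - 1) := by gcongr
    _ ≤ s * (‖v‖ ^ p / a ^ (p - 1)) + t * (‖w‖ ^ p / b ^ (p - 1)) :=
        (convexOn_rpow_div_rpow_sub_one hp).2 (x := (a, ‖v‖)) (y := (b, ‖w‖))
          ⟨ha, norm_nonneg v⟩ ⟨hb, norm_nonneg w⟩ hs ht hst

theorem HasFDerivAt.rpow_mean {E : Type*} [NormedAddCommGroup E] [NormedSpace ℝ E]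
    {f g : E → ℝ} {f' g' : E →L[ℝ] ℝ} {x : E} {p s t : ℝ} (hf : HasFDerivAt f f' x)
    (hg : HasFDerivAt g g' x) (hfx : 0 < f x) (hgx : 0 < g x) (hp : p ≠ 0)
    (hS : s * f x ^ p + t * g x ^ p ≠ 0) :
    HasFDerivAt (fun y => (s * f y ^ p + t * g y ^ p) ^ (1 / p))
      ((s * f x ^ p + t * g x ^ p) ^ (1 / p - 1) •
        (s • f x ^ (p - 1) • f' + t • g x ^ (p - 1) • g')) x := by
  have hsum : HasFDerivAt (fun y => s * f y ^ p + t * g y ^ p)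
      (s • (p * f x ^ (p - 1)) • f' + t • (p * g x ^ (p - 1)) • g') x :=
    ((hf.rpow_const (Or.inl hfx.ne')).const_mul s).add
      ((hg.rpow_const (Or.inl hgx.ne')).const_mul t)
  convert hsum.rpow_const (p := 1 / p) (Or.inl hS) using 1
  match_scalars <;> field_simp

section NormRpowSmul

variable {E : Type*} [SeminormedAddCommGroup E] [NormedSpace ℝ E] {c : ℝ}

theorem norm_rpow_smul_rpow {q : ℝ} (hc : 0 < c) (v : E) (p : ℝ) :
    ‖c ^ q • v‖ ^ p = c ^ (q * p) * ‖v‖ ^ p := by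
  rw [norm_smul, norm_of_nonneg (rpow_nonneg hc.le q),
    mul_rpow (rpow_nonneg hc.le q) (norm_nonneg v), ← rpow_mul hc.le]

theorem norm_rpow_sub_one_smul_rpow_div {p : ℝ} (hc : 0 < c) (v : E) :
    ‖c ^ (p - 1) • v‖ ^ p / (c ^ p) ^ (p - 1) = ‖v‖ ^ p := by
  rw [norm_rpow_smul_rpow hc, ← rpow_mul hc.le, mul_comm (p - 1) p,
    mul_div_cancel_left₀ _ (rpow_pos_of_pos hc _).ne']

theorem norm_rpow_inv_sub_one_smul_rpow {p : ℝ} (hc : 0 < c) (hp : p ≠ 0) (v : E) :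
    ‖c ^ (1 / p - 1) • v‖ ^ p = ‖v‖ ^ p / c ^ (p - 1) := by
  have hexp : (1 / p - 1) * p = -(p - 1) := by field_simp; ring
  rw [norm_rpow_smul_rpow hc, hexp, rpow_neg hc.le, inv_mul_eq_div]

end NormRpowSmul

theorem eta_gradient_convexity_general
    {E : Type*} [NormedAddCommGroup E] [InnerProductSpace ℝ E]
    (Ω : Set E) (p : ℝ) (hp : 1 < p)
    (u w : E → ℝ)
    (hu : ∀ x ∈ Ω, DifferentiableAt ℝ u x) (hw : ∀ x ∈ Ω, DifferentiableAt ℝ w x)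
    (hupos : ∀ x ∈ Ω, 0 < u x) (hwpos : ∀ x ∈ Ω, 0 < w x)
    (t : ℝ) (ht : t ∈ Set.Icc (0:ℝ) 1)
    (η : E → ℝ) (hη : ∀ x, η x = (t * u x ^ p + (1 - t) * w x ^ p) ^ (1 / p)) :
    ∀ x ∈ Ω, ‖fderiv ℝ η x‖ ^ p ≤ t * ‖fderiv ℝ u x‖ ^ p + (1 - t) * ‖fderiv ℝ w x‖ ^ p := by
  intro x hx
  obtain ⟨ht0, ht1⟩ := ht
  have hux : 0 < u x ^ p := rpow_pos_of_pos (hupos x hx) p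
  have hwx : 0 < w x ^ p := rpow_pos_of_pos (hwpos x hx) p
  have hS : 0 < t * u x ^ p + (1 - t) * w x ^ p :=
    convex_Ioi (0 : ℝ) hux hwx ht0 (sub_nonneg.2 ht1) (add_sub_cancel t 1)
  have hDη := (hu x hx).hasFDerivAt.rpow_mean (hw x hx).hasFDerivAt (hupos x hx) (hwpos x hx)
    (by linarith : p ≠ 0) hS.ne'
  rw [funext hη, hDη.fderiv]
  calc _ = _ := norm_rpow_inv_sub_one_smul_rpow hS (by linarith) _
    _ ≤ t * (‖u x ^ (p - 1) • fderiv ℝ u x‖ ^ p / (u x ^ p) ^ (p - 1))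
        + (1 - t) * (‖w x ^ (p - 1) • fderiv ℝ w x‖ ^ p / (w x ^ p) ^ (p - 1)) :=
      norm_add_rpow_div_rpow_sub_one_le hp.le hux hwx ht0 (sub_nonneg.2 ht1)
        (add_sub_cancel t 1) _ _
    _ = t * ‖fderiv ℝ u x‖ ^ p + (1 - t) * ‖fderiv ℝ w x‖ ^ p := by
      congr 2
      exacts [norm_rpow_sub_one_smul_rpow_div (hupos x hx) (fderiv ℝ u x),
        norm_rpow_sub_one_smul_rpow_div (hwpos x hx) (fderiv ℝ w x)]

/-- pointwise convexity inequality for η_t = (t u^p + (1-t) w^p)^{1/p}. -/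
theorem eta_gradient_convexity
    {E : Type*} [NormedAddCommGroup E] [InnerProductSpace ℝ E]
    (Ω : Set E) (hΩ : IsOpen Ω) (p : ℝ) (hp : 1 < p)
    (u w : E → ℝ)
    (hu : ∀ x ∈ Ω, DifferentiableAt ℝ u x) (hw : ∀ x ∈ Ω, DifferentiableAt ℝ w x)
    (hupos : ∀ x ∈ Ω, 0 < u x) (hwpos : ∀ x ∈ Ω, 0 < w x)
    (t : ℝ) (ht : t ∈ Set.Icc (0:ℝ) 1)
    (η : E → ℝ) (hη : ∀ x, η x = (t * u x ^ p + (1 - t) * w x ^ p) ^ (1 / p)) :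
    ∀ x ∈ Ω, ‖fderiv ℝ η x‖ ^ p ≤ t * ‖fderiv ℝ u x‖ ^ p + (1 - t) * ‖fderiv ℝ w x‖ ^ p :=
  eta_gradient_convexity_general Ω p hp u w hu hw hupos hwpos t ht η hη
end

section
/- If equality |Dη_t|^p = t·|Du|^p + (1-t)·|Dw|^p holds everywhere for some t ∈ (0,1), where η_t = (t·u^p + (1-t)·w^p)^{1/p}, then Du/u = Dw/w everywhere, and hence log u - log w is locally constant; if the domain is connected, then u = c·w for some constant c > 0. -/
/-!
Write `α = Du / u`, `β = Dw / w` and `λ = t uᵖ / ηᵖ`. The chain rule gives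
`Dη = η (λ α + (1 - λ) β)`, while `t ‖Du‖ᵖ + (1 - t) ‖Dw‖ᵖ = ηᵖ (λ ‖α‖ᵖ + (1 - λ) ‖β‖ᵖ)`, so the
hypothesis is the equality case of Jensen's inequality for `‖·‖ᵖ`. The dual norm of an inner
product space is strictly convex, hence so is `‖·‖ᵖ` for `p > 1`, and `α = β`. Then
`log u - log w` has zero derivative on the connected open set `Ω`, so it is constant.
-/

open Real

namespace ContinuousLinearMap

variable {E : Type*} [NormedAddCommGroup E]

theorem opNorm_le_of_apply_le [NormedSpace ℝ E] {f : E →L[ℝ] ℝ} {C : ℝ}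
    (h : ∀ x, ‖x‖ ≤ 1 → f x ≤ C) : ‖f‖ ≤ C := by
  have hC : 0 ≤ C := by simpa using h 0 (by simp)
  refine opNorm_le_of_unit_norm hC fun x hx => abs_le.2 ⟨?_, h x hx.le⟩
  simpa [neg_le] using h (-x) (by simp [hx])

theorem norm_add_norm_le_of_apply_add_apply_le [NormedSpace ℝ E] {f g : E →L[ℝ] ℝ} {C : ℝ}
    (h : ∀ x y, ‖x‖ ≤ 1 → ‖y‖ ≤ 1 → f x + g y ≤ C) : ‖f‖ + ‖g‖ ≤ C := by
  have hf : ∀ y, ‖y‖ ≤ 1 → ‖f‖ ≤ C - g y := fun y hy =>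
    opNorm_le_of_apply_le fun x hx => le_sub_iff_add_le.2 (h x y hx hy)
  have hg : ‖g‖ ≤ C - ‖f‖ := opNorm_le_of_apply_le fun y hy => le_sub_comm.1 (hf y hy)
  linarith

variable [InnerProductSpace ℝ E]

theorem norm_add_sq_add_norm_sub_sq_le (f g : E →L[ℝ] ℝ) :
    ‖f + g‖ ^ 2 + ‖f - g‖ ^ 2 ≤ 2 * (‖f‖ ^ 2 + ‖g‖ ^ 2) := by
  set s := ‖f + g‖
  set r := ‖f - g‖
  have hbound : ∀ x y : E, ‖x‖ ≤ 1 → ‖y‖ ≤ 1 →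
      (s • (f + g)) x + (r • (f - g)) y ≤ ‖f‖ ^ 2 + ‖g‖ ^ 2 + (s ^ 2 + r ^ 2) / 2 := by
    intro x y hx hy
    have hsx : ‖s • x‖ ≤ s := by
      rw [norm_smul, norm_norm]; exact mul_le_of_le_one_right (norm_nonneg _) hx
    have hry : ‖r • y‖ ≤ r := by
      rw [norm_smul, norm_norm]; exact mul_le_of_le_one_right (norm_nonneg _) hy
    have hpar := parallelogram_law_with_norm ℝ (s • x) (r • y)
    have hf := le_trans (le_abs_self _) (f.le_opNorm (s • x + r • y))
    have hg := le_trans (le_abs_self _) (g.le_opNorm (s • x - r • y))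
    have hexp : (s • (f + g)) x + (r • (f - g)) y = f (s • x + r • y) + g (s • x - r • y) := by
      simp only [smul_apply, add_apply, sub_apply, map_add, map_sub, map_smul, smul_eq_mul]
      ring
    rw [hexp]
    -- AM-GM in the form `m n ≤ m ^ 2 + n ^ 2 / 4`, sharp when `f ± g` attain their norms
    nlinarith [sq_nonneg (‖f‖ - ‖s • x + r • y‖ / 2), sq_nonneg (‖g‖ - ‖s • x - r • y‖ / 2),
      norm_nonneg (s • x), norm_nonneg (r • y)]
  have := norm_add_norm_le_of_apply_add_apply_le hbound
  rw [norm_smul, norm_smul, norm_norm, norm_norm] at this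
  nlinarith

-- `E` need not be complete, so there is no Riesz representation of the dual; instead the dual
-- norm satisfies the parallelogram law and hence comes from an inner product (Jordan–von Neumann).
instance instStrictConvexSpace : StrictConvexSpace ℝ (E →L[ℝ] ℝ) :=
  letI := InnerProductSpace.ofNorm ℝ (E := E →L[ℝ] ℝ) fun f g => by
    have h := norm_add_sq_add_norm_sub_sq_le (f + g) (f - g)
    have h' := norm_add_sq_add_norm_sub_sq_le f g
    rw [show f + g + (f - g) = (2 : ℝ) • f by module, show f + g - (f - g) = (2 : ℝ) • g by module,
      norm_smul, norm_smul] at h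
    norm_num at h
    nlinarith
  inferInstance

end ContinuousLinearMap

theorem strictConvexOn_norm_rpow {F : Type*} [NormedAddCommGroup F] [NormedSpace ℝ F]
    [StrictConvexSpace ℝ F] {p : ℝ} (hp : 1 < p) :
    StrictConvexOn ℝ Set.univ fun x : F => ‖x‖ ^ p := by
  refine ⟨convex_univ, fun x _ y _ hxy a b ha hb hab => ?_⟩
  have hp0 : 0 ≤ p := by linarith
  have htri : ‖a • x + b • y‖ ≤ a * ‖x‖ + b * ‖y‖ := by
    simpa [norm_smul, abs_of_pos ha, abs_of_pos hb] using norm_add_le (a • x) (b • y)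
  simp only [smul_eq_mul]
  rcases eq_or_ne ‖x‖ ‖y‖ with hn | hn
  · have hlt : ‖a • x + b • y‖ < ‖x‖ := norm_combo_lt_of_ne le_rfl hn.ge hxy ha hb hab
    calc ‖a • x + b • y‖ ^ p < ‖x‖ ^ p := rpow_lt_rpow (norm_nonneg _) hlt (by linarith)
      _ = a * ‖x‖ ^ p + b * ‖y‖ ^ p := by rw [← hn, ← add_mul, hab, one_mul]
  · calc ‖a • x + b • y‖ ^ p ≤ (a * ‖x‖ + b * ‖y‖) ^ p := rpow_le_rpow (norm_nonneg _) htri hp0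
      _ < a * ‖x‖ ^ p + b * ‖y‖ ^ p :=
        (strictConvexOn_rpow hp).2 (norm_nonneg x) (norm_nonneg y) hn ha hb hab

theorem HasFDerivAt.weighted_rpow_mean {E : Type*} [NormedAddCommGroup E] [NormedSpace ℝ E]
    {u w : E → ℝ} {A B : E →L[ℝ] ℝ} {x : E} {p t : ℝ} (hu : HasFDerivAt u A x)
    (hw : HasFDerivAt w B x) (hux : 0 < u x) (hwx : 0 < w x) (hp : p ≠ 0)
    (hF : 0 < t * u x ^ p + (1 - t) * w x ^ p) :
    HasFDerivAt (fun y => (t * u y ^ p + (1 - t) * w y ^ p) ^ (1 / p))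
      ((t * u x ^ p + (1 - t) * w x ^ p) ^ (1 / p - 1) •
        ((t * u x ^ (p - 1)) • A + ((1 - t) * w x ^ (p - 1)) • B)) x := by
  have hsum := ((hu.rpow_const (p := p) (Or.inl hux.ne')).const_mul t).add
    ((hw.rpow_const (p := p) (Or.inl hwx.ne')).const_mul (1 - t))
  convert hsum.rpow_const (p := 1 / p) (Or.inl hF.ne') using 1
  · rfl
  · simp only [Pi.add_apply]
    match_scalars <;> field_simp

theorem eq_of_norm_smul_add_smul_rpow_eq {V : Type*} [NormedAddCommGroup V] [NormedSpace ℝ V]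
    [StrictConvexSpace ℝ V] {p c d : ℝ} (hp : 1 < p) (hc : 0 < c) (hd : 0 < d) {α β : V}
    (h : ‖c • α + d • β‖ ^ p = (c + d) ^ (p - 1) * (c * ‖α‖ ^ p + d * ‖β‖ ^ p)) : α = β := by
  by_contra hne
  have hcd : 0 < c + d := add_pos hc hd
  have hlt := (strictConvexOn_norm_rpow (F := V) hp).2 (Set.mem_univ α) (Set.mem_univ β) hne
    (div_pos hc hcd) (div_pos hd hcd) (by field_simp)
  have hcomb : (c / (c + d)) • α + (d / (c + d)) • β = (c + d)⁻¹ • (c • α + d • β) := by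
    module
  simp only [hcomb, norm_smul, norm_inv, norm_of_nonneg hcd.le, smul_eq_mul,
    mul_rpow (inv_nonneg.2 hcd.le) (norm_nonneg _), h, inv_rpow hcd.le] at hlt
  rw [rpow_sub_one hcd.ne'] at hlt
  field_simp at hlt
  linarith

theorem inv_smul_eq_inv_smul_of_norm_rpow_eq {V : Type*} [NormedAddCommGroup V]
    [NormedSpace ℝ V] [StrictConvexSpace ℝ V] {p t a b : ℝ} (hp : 1 < p)
    (ht : t ∈ Set.Ioo 0 1) (ha : 0 < a) (hb : 0 < b) {A B : V}
    (h : ‖(t * a ^ p + (1 - t) * b ^ p) ^ (1 / p - 1) •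
        ((t * a ^ (p - 1)) • A + ((1 - t) * b ^ (p - 1)) • B)‖ ^ p =
      t * ‖A‖ ^ p + (1 - t) * ‖B‖ ^ p) :
    a⁻¹ • A = b⁻¹ • B := by
  obtain ⟨ht0, ht1⟩ := ht
  have hc : 0 < t * a ^ p := by positivity
  have hd : 0 < (1 - t) * b ^ p := mul_pos (by linarith) (by positivity)
  set F := t * a ^ p + (1 - t) * b ^ p
  have hF : 0 < F := add_pos hc hd
  have hsmul : ∀ {s c : ℝ} (C : V), 0 < c → (s * c ^ (p - 1)) • C = (s * c ^ p) • c⁻¹ • C :=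
    fun C hc => by rw [smul_smul, rpow_sub_one hc.ne']; ring_nf
  have hnorm : ∀ {s c : ℝ} (C : V), 0 < c → s * ‖C‖ ^ p = (s * c ^ p) * ‖c⁻¹ • C‖ ^ p :=
    fun C hc => by
      rw [norm_smul, norm_inv, norm_of_nonneg hc.le, mul_rpow (inv_nonneg.2 hc.le) (norm_nonneg _),
        inv_rpow hc.le]
      field_simp
  rw [hsmul A ha, hsmul B hb, hnorm A ha, hnorm B hb, norm_smul, norm_of_nonneg (by positivity),
    mul_rpow (by positivity) (norm_nonneg _), ← rpow_mul hF.le] at h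
  refine eq_of_norm_smul_add_smul_rpow_eq hp hc hd ?_
  rw [← h, ← mul_assoc, ← rpow_add hF, show p - 1 + (1 / p - 1) * p = 0 by field_simp; ring,
    rpow_zero, one_mul]

theorem IsOpen.exists_pos_mul_eq_of_inv_smul_fderiv_eq {E : Type*} [NormedAddCommGroup E]
    [NormedSpace ℝ E] {Ω : Set E} (hΩ : IsOpen Ω) (hconn : IsPreconnected Ω) {u w : E → ℝ}
    (hu : DifferentiableOn ℝ u Ω) (hw : DifferentiableOn ℝ w Ω)
    (hupos : ∀ x ∈ Ω, 0 < u x) (hwpos : ∀ x ∈ Ω, 0 < w x)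
    (h : ∀ x ∈ Ω, (u x)⁻¹ • fderiv ℝ u x = (w x)⁻¹ • fderiv ℝ w x) :
    ∃ c : ℝ, 0 < c ∧ ∀ x ∈ Ω, u x = c * w x := by
  have hlog : ∀ {f : E → ℝ}, DifferentiableOn ℝ f Ω → (∀ x ∈ Ω, 0 < f x) → ∀ x ∈ Ω,
      HasFDerivAt (fun y => log (f y)) ((f x)⁻¹ • fderiv ℝ f x) x := fun hf hpos x hx =>
    ((hf x hx).differentiableAt (hΩ.mem_nhds hx)).hasFDerivAt.log (hpos x hx).ne'
  obtain ⟨a, ha⟩ := hΩ.exists_eq_add_of_fderiv_eq hconn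
    (fun x hx => (hlog hu hupos x hx).differentiableAt.differentiableWithinAt)
    (fun x hx => (hlog hw hwpos x hx).differentiableAt.differentiableWithinAt)
    (fun x hx => by rw [(hlog hu hupos x hx).fderiv, (hlog hw hwpos x hx).fderiv, h x hx])
  refine ⟨exp a, exp_pos a, fun x hx => ?_⟩
  have hlog_eq : log (u x) = log (w x) + a := ha hx
  rw [← exp_log (hupos x hx), ← exp_log (hwpos x hx), hlog_eq, exp_add, mul_comm]

/-- equality in the convexity inequality forces proportionality. -/
theorem eta_gradient_equality_case
    {E : Type*} [NormedAddCommGroup E] [InnerProductSpace ℝ E]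
    (Ω : Set E) (hΩ : IsOpen Ω) (hconn : IsConnected Ω) (p : ℝ) (hp : 1 < p)
    (u w : E → ℝ)
    (hu : ContDiffOn ℝ 1 u Ω) (hw : ContDiffOn ℝ 1 w Ω)
    (hupos : ∀ x ∈ Ω, 0 < u x) (hwpos : ∀ x ∈ Ω, 0 < w x)
    (t : ℝ) (ht : t ∈ Set.Ioo (0:ℝ) 1)
    (η : E → ℝ) (hη : ∀ x, η x = (t * u x ^ p + (1 - t) * w x ^ p) ^ (1 / p))
    (heq : ∀ x ∈ Ω,
      ‖fderiv ℝ η x‖ ^ p = t * ‖fderiv ℝ u x‖ ^ p + (1 - t) * ‖fderiv ℝ w x‖ ^ p) :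
    (∀ x ∈ Ω, (u x)⁻¹ • fderiv ℝ u x = (w x)⁻¹ • fderiv ℝ w x) ∧
      ∃ c : ℝ, 0 < c ∧ ∀ x ∈ Ω, u x = c * w x := by
  have hu' := hu.differentiableOn one_ne_zero
  have hw' := hw.differentiableOn one_ne_zero
  have hgrad : ∀ x ∈ Ω, (u x)⁻¹ • fderiv ℝ u x = (w x)⁻¹ • fderiv ℝ w x := by
    intro x hx
    have hF : 0 < t * u x ^ p + (1 - t) * w x ^ p :=
      add_pos (mul_pos ht.1 (rpow_pos_of_pos (hupos x hx) p))
        (mul_pos (sub_pos.2 ht.2) (rpow_pos_of_pos (hwpos x hx) p))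
    have hηx := ((hu' x hx).differentiableAt (hΩ.mem_nhds hx)).hasFDerivAt.weighted_rpow_mean
      ((hw' x hx).differentiableAt (hΩ.mem_nhds hx)).hasFDerivAt (hupos x hx) (hwpos x hx)
      (by linarith) hF
    rw [← funext hη] at hηx
    exact inv_smul_eq_inv_smul_of_norm_rpow_eq hp ht (hupos x hx) (hwpos x hx)
      (hηx.fderiv ▸ heq x hx)
  exact ⟨hgrad, hΩ.exists_pos_mul_eq_of_inv_smul_fderiv_eq hconn.isPreconnected hu' hw' hupos
    hwpos hgrad⟩
end
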